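/- For every Q ∈ SO(3) and every x ∈ ℝ³, xᵀ(tr(Q)·I₃ − Q)x ≥ 2·(1 − ‖I₃−Q‖²/4)·‖x‖². -/

import Mathlib

open Matrix Polynomial

noncomputable section

/-- The hat map sending `x ∈ ℝ³` to the skew-symmetric matrix `x̂` with `x̂ y = x × y`. -/
def hat (x : Fin 3 → ℝ) : Matrix (Fin 3) (Fin 3) ℝ :=
  !![0, -x 2, x 1; x 2, 0, -x 0; -x 1, x 0, 0]

/-- The vee map, inverse of the hat map on skew-symmetric `3 × 3` matrices. -/
def vee (A : Matrix (Fin 3) (Fin 3) ℝ) : Fin 3 → ℝ :=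
  ![A 2 1, A 0 2, A 1 0]

/-- `SO3 R` iff `R` is a rotation matrix: `RᵀR = I₃` and `det R = 1`. -/
def SO3 (R : Matrix (Fin 3) (Fin 3) ℝ) : Prop :=
  Rᵀ * R = 1 ∧ R.det = 1

/-- Frobenius inner product `⟨A,B⟩ = tr(AᵀB)`. -/
def finner (A B : Matrix (Fin 3) (Fin 3) ℝ) : ℝ := (Aᵀ * B).trace

/-- Frobenius norm `‖A‖ = √⟨A,A⟩`. -/
def fnorm (A : Matrix (Fin 3) (Fin 3) ℝ) : ℝ := Real.sqrt (finner A A)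

/-- Euclidean norm of a vector. -/
def vnorm {k : ℕ} (x : Fin k → ℝ) : ℝ := Real.sqrt (x ⬝ᵥ x)

/-- Third standard basis vector `e₃ = (0,0,1)` of `ℝ³`. -/
def e3 : Fin 3 → ℝ := ![0, 0, 1]

/-!
For a rotation `Q` with trace `t` one has `‖I₃ - Q‖² = 6 - 2t`, so the right-hand side is
`(t - 1)‖x‖²`, while the left-hand side is `t‖x‖² - xᵀQx`. The inequality therefore reduces
to `xᵀQx ≤ ‖x‖²`, which holds because `0 ≤ ‖x - Qx‖² = 2(‖x‖² - xᵀQx)` for `Q` orthogonal.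
-/

theorem dotProduct_self_nonneg' {ι : Type*} [Fintype ι] (x : ι → ℝ) : 0 ≤ x ⬝ᵥ x :=
  dotProduct_star_self_nonneg x

theorem finner_self_nonneg (A : Matrix (Fin 3) (Fin 3) ℝ) : 0 ≤ finner A A := by
  simpa only [finner, conjTranspose_eq_transpose_of_trivial]
    using (posSemidef_conjTranspose_mul_self A).trace_nonneg

theorem fnorm_sq (A : Matrix (Fin 3) (Fin 3) ℝ) : fnorm A ^ 2 = finner A A :=
  Real.sq_sqrt (finner_self_nonneg A)

theorem vnorm_sq {k : ℕ} (x : Fin k → ℝ) : vnorm x ^ 2 = x ⬝ᵥ x :=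
  Real.sq_sqrt (dotProduct_self_nonneg' x)

theorem finner_one_sub_self_of_transpose_mul_self {Q : Matrix (Fin 3) (Fin 3) ℝ}
    (hQ : Qᵀ * Q = 1) : finner (1 - Q) (1 - Q) = 6 - 2 * Q.trace := by
  have hexpand : (1 - Q)ᵀ * (1 - Q) = 1 - Q - Qᵀ + Qᵀ * Q := by
    simp only [transpose_sub, transpose_one, sub_mul, mul_sub, one_mul, mul_one]
    abel
  rw [finner, hexpand, hQ, trace_add, trace_sub, trace_sub, trace_transpose, trace_one]
  norm_num
  ring

section Orthogonal

variable {ι : Type*} [Fintype ι] [DecidableEq ι] {Q : Matrix ι ι ℝ}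

theorem mulVec_dotProduct_mulVec_self_of_transpose_mul_self (hQ : Qᵀ * Q = 1) (x : ι → ℝ) :
    Q *ᵥ x ⬝ᵥ Q *ᵥ x = x ⬝ᵥ x := by
  rw [dotProduct_mulVec, ← vecMul_transpose, vecMul_vecMul, hQ, vecMul_one]

theorem dotProduct_mulVec_le_of_transpose_mul_self (hQ : Qᵀ * Q = 1) (x : ι → ℝ) :
    x ⬝ᵥ Q *ᵥ x ≤ x ⬝ᵥ x := by
  have hexpand : (x - Q *ᵥ x) ⬝ᵥ (x - Q *ᵥ x) = 2 * (x ⬝ᵥ x - x ⬝ᵥ Q *ᵥ x) := by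
    rw [sub_dotProduct, dotProduct_sub, dotProduct_sub, dotProduct_comm (Q *ᵥ x) x,
      mulVec_dotProduct_mulVec_self_of_transpose_mul_self hQ]
    ring
  linarith [dotProduct_self_nonneg' (x - Q *ᵥ x)]

end Orthogonal

theorem dotProduct_trace_smul_one_sub_mulVec {ι : Type*} [Fintype ι] [DecidableEq ι]
    (Q : Matrix ι ι ℝ) (x : ι → ℝ) :
    x ⬝ᵥ (Q.trace • (1 : Matrix ι ι ℝ) - Q) *ᵥ x = Q.trace * (x ⬝ᵥ x) - x ⬝ᵥ Q *ᵥ x := by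
  rw [sub_mulVec, dotProduct_sub, smul_mulVec, one_mulVec, dotProduct_smul, smul_eq_mul]

/-- for `Q ∈ SO(3)` and `x ∈ ℝ³`,
`xᵀ(tr(Q) I₃ − Q) x ≥ 2 (1 − ‖I₃ − Q‖²/4) ‖x‖²`. -/
theorem stmt_7 (Q : Matrix (Fin 3) (Fin 3) ℝ) (hQ : SO3 Q) (x : Fin 3 → ℝ) :
    x ⬝ᵥ (Q.trace • (1 : Matrix (Fin 3) (Fin 3) ℝ) - Q).mulVec x ≥
      2 * (1 - fnorm (1 - Q) ^ 2 / 4) * vnorm x ^ 2 := by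
  rw [dotProduct_trace_smul_one_sub_mulVec, fnorm_sq,
    finner_one_sub_self_of_transpose_mul_self hQ.1, vnorm_sq]
  linarith [dotProduct_mulVec_le_of_transpose_mul_self hQ.1 x]
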